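/- (Bias decomposition, the central identity in the proof of Theorem 2.) Let φ̂_unc := ∑_{a∈α} ⟨ŵ(a) + φ̂(A, a), Ĝ(a)⟩ + ⟨ŵ(A), Y − Ĝ(A)⟩ / Ĥ(A) be the uncentered efficient influence function with the nuisance functions replaced by fixed estimates. Then E[φ̂_unc] − Ψ(w) = E[∑_{a∈α} ⟨ŵ(a) − w(a) + ∑_{a'∈α} H(a')·φ̂(a', a), G(a)⟩] + E[∑_{a∈α} ⟨ŵ(a), Ĝ(a) − G(a)⟩ · (1 − H(a)/Ĥ(a))] + E[∑_{a∈α} ⟨φ̂(A, a) − φ(A, a), Ĝ(a) − G(a)⟩]. -/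

import Mathlib

open MeasureTheory RealInnerProductSpace

/-- Cluster-level treatment probability `H(a) = P(A = a | m) = μ[1_{A=a}|m]`. -/
noncomputable def condH {Ω α : Type*} {mΩ : MeasurableSpace Ω} [DecidableEq α]
    (μ : Measure Ω) (m : MeasurableSpace Ω) (A : Ω → α) (a : α) : Ω → ℝ :=
  μ[fun ω => if A ω = a then (1:ℝ) else 0|m]

/-- Cluster-level outcome regression `G(a) = μ[Y·1_{A=a}|m] / H(a)` (componentwise). -/
noncomputable def condG {Ω α : Type*} {mΩ : MeasurableSpace Ω} [DecidableEq α] {n : ℕ}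
    (μ : Measure Ω) (m : MeasurableSpace Ω) (A : Ω → α)
    (Y : Ω → EuclideanSpace ℝ (Fin n)) (a : α) : Ω → EuclideanSpace ℝ (Fin n) :=
  fun ω => (condH μ m A a ω)⁻¹ •
    (μ[fun ω' => (if A ω' = a then (1:ℝ) else 0) • Y ω'|m]) ω

/-!
Conditioning on `m` turns the expectation of any `ψ (A, Y)` with `ψ b` affine and with
`m`-measurable coefficients into `E[∑ b, H b * ψ (b, G b)]`: by the pull-out property, on the arm
`b` the indicator `1_{A = b}` may be replaced by `H b` and `1_{A = b} • Y` by `H b • G b`.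
After this both sides of the identity are expectations of `m`-measurable integrands, and these
agree pointwise: the terms in `φ` cancel because `∑ a', H a' • φ a' a = 0`, and `∑ b, H b = 1`
absorbs the terms that do not depend on the treatment.
-/

open Finset
open scoped ENNReal

theorem integral_bilin_eq_integral_bilin_condExp {Ω E F G : Type*} {m mΩ : MeasurableSpace Ω}
    {μ : Measure Ω} [NormedAddCommGroup E] [NormedSpace ℝ E] [CompleteSpace E]
    [NormedAddCommGroup F] [NormedSpace ℝ F] [NormedAddCommGroup G] [NormedSpace ℝ G]
    [CompleteSpace G] (B : F →L[ℝ] E →L[ℝ] G) (hm : m ≤ mΩ) [SigmaFinite (μ.trim hm)]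
    {f : Ω → F} {g : Ω → E} (hf : StronglyMeasurable[m] f)
    (hfg : Integrable (fun ω => B (f ω) (g ω)) μ) (hg : Integrable g μ) :
    ∫ ω, B (f ω) (g ω) ∂μ = ∫ ω, B (f ω) (μ[g|m] ω) ∂μ :=
  (integral_condExp hm).symm.trans
    (integral_congr_ae (condExp_bilin_of_stronglyMeasurable_left B hf hfg hg))

theorem MeasureTheory.MemLp.inner {Ω E : Type*} {mΩ : MeasurableSpace Ω} {μ : Measure Ω}
    [NormedAddCommGroup E] [InnerProductSpace ℝ E] {p q r : ℝ≥0∞} [ENNReal.HolderTriple p q r]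
    {f g : Ω → E} (hf : MemLp f p μ) (hg : MemLp g q μ) :
    MemLp (fun ω => ⟪f ω, g ω⟫) r μ :=
  (innerSL ℝ).memLp_of_bilin r hf hg

theorem bias_decomposition_pointwise {α E : Type*} [Fintype α] [NormedAddCommGroup E]
    [InnerProductSpace ℝ E] (H Hh : α → ℝ) (w wh G Gh : α → E) (φ φh : α → α → E)
    (hH : ∑ b, H b = 1) (hφ : ∀ a, ∑ b, H b • φ b a = 0) :
    ∑ b, H b * ((∑ a, ⟪wh a + φh b a, Gh a⟫) + ⟪wh b, G b - Gh b⟫ / Hh b) - ∑ a, ⟪w a, G a⟫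
      = ∑ a, ⟪wh a - w a + ∑ b, H b • φh b a, G a⟫
        + ∑ a, ⟪wh a, Gh a - G a⟫ * (1 - H a / Hh a)
        + ∑ b, H b * ∑ a, ⟪φh b a - φ b a, Gh a - G a⟫ := by
  have average (ψ : α → α → E) (v : α → E) :
      ∑ b, H b * ∑ a, ⟪ψ b a, v a⟫ = ∑ a, ⟪∑ b, H b • ψ b a, v a⟫ := by
    simp_rw [mul_sum, sum_inner, real_inner_smul_left]
    exact sum_comm
  have cross : ∑ b, H b * ∑ a, ⟪φh b a, Gh a⟫
      = ∑ a, ⟪∑ b, H b • φh b a, G a⟫ + ∑ b, H b * ∑ a, ⟪φh b a - φ b a, Gh a - G a⟫ := by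
    simp only [inner_sub_left, sum_sub_distrib, mul_sub, average, hφ, inner_zero_left,
      sum_const_zero, sub_zero, inner_sub_right]
    ring
  have arm (a : α) : ⟪wh a - w a, G a⟫ + ⟪wh a, Gh a - G a⟫ * (1 - H a / Hh a)
      = ⟪wh a, Gh a⟫ + H a * (⟪wh a, G a - Gh a⟫ / Hh a) - ⟪w a, G a⟫ := by
    simp only [inner_sub_left, inner_sub_right]
    ring
  have arms := sum_congr rfl fun a (_ : a ∈ univ) => arm a
  simp only [inner_add_left, sum_add_distrib, mul_add, mul_sub, sum_sub_distrib, ← sum_mul, hH,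
    one_mul] at arms ⊢
  linear_combination cross - arms

theorem integral_bias_decomposition {Ω α E : Type*} {mΩ : MeasurableSpace Ω} {μ : Measure Ω}
    [IsFiniteMeasure μ] [Fintype α] [NormedAddCommGroup E] [InnerProductSpace ℝ E]
    {H Hh : α → Ω → ℝ} {w wh G Gh : α → Ω → E} {φ φh : α → α → Ω → E}
    (hH : ∀ b, MemLp (H b) ∞ μ) (hHh : ∀ b, MemLp (fun ω => (Hh b ω)⁻¹) ∞ μ)
    (hw : ∀ a, MemLp (w a) ∞ μ) (hwh : ∀ a, MemLp (wh a) ∞ μ)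
    (hG : ∀ a, MemLp (G a) ∞ μ) (hGh : ∀ a, MemLp (Gh a) ∞ μ)
    (hφ : ∀ b a, MemLp (φ b a) ∞ μ) (hφh : ∀ b a, MemLp (φh b a) ∞ μ)
    (hH1 : ∀ᵐ ω ∂μ, ∑ b, H b ω = 1) (hφ0 : ∀ a, ∀ᵐ ω ∂μ, ∑ b, H b ω • φ b a ω = 0) :
    (∫ ω, ∑ b, H b ω * ((∑ a, ⟪wh a ω + φh b a ω, Gh a ω⟫) + ⟪wh b ω, G b ω - Gh b ω⟫ / Hh b ω) ∂μ)
      - ∫ ω, ∑ a, ⟪w a ω, G a ω⟫ ∂μ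
    = (∫ ω, ∑ a, ⟪wh a ω - w a ω + ∑ b, H b ω • φh b a ω, G a ω⟫ ∂μ)
      + (∫ ω, ∑ a, ⟪wh a ω, Gh a ω - G a ω⟫ * (1 - H a ω / Hh a ω) ∂μ)
      + ∫ ω, ∑ b, H b ω * ∑ a, ⟪φh b a ω - φ b a ω, Gh a ω - G a ω⟫ ∂μ := by
  have int {f : Ω → ℝ} (hf : MemLp f ∞ μ) : Integrable f μ := hf.integrable le_top
  have hL : MemLp (fun ω => ∑ b, H b ω
      * ((∑ a, ⟪wh a ω + φh b a ω, Gh a ω⟫) + ⟪wh b ω, G b ω - Gh b ω⟫ / Hh b ω)) ∞ μ :=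
    memLp_finsetSum _ fun b _ => ((memLp_finsetSum _ fun a _ =>
      ((hwh a).add (hφh b a)).inner (hGh a) (r := ∞)).add
      ((hHh b).mul' ((hwh b).inner ((hG b).sub (hGh b)) (r := ∞)))).mul' (hH b)
  have hB : MemLp (fun ω => ∑ a, ⟪w a ω, G a ω⟫) ∞ μ :=
    memLp_finsetSum _ fun a _ => (hw a).inner (hG a)
  have hT1 : MemLp (fun ω => ∑ a, ⟪wh a ω - w a ω + ∑ b, H b ω • φh b a ω, G a ω⟫) ∞ μ :=
    memLp_finsetSum _ fun a _ => (((hwh a).sub (hw a)).add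
      (memLp_finsetSum _ fun b _ => (hφh b a).smul (hH b))).inner (hG a)
  have hT2 : MemLp (fun ω => ∑ a, ⟪wh a ω, Gh a ω - G a ω⟫ * (1 - H a ω / Hh a ω)) ∞ μ :=
    memLp_finsetSum _ fun a _ => ((memLp_top_const 1).sub ((hHh a).mul' (hH a))).mul'
      ((hwh a).inner ((hGh a).sub (hG a)) (r := ∞))
  have hT3 : MemLp (fun ω => ∑ b, H b ω * ∑ a, ⟪φh b a ω - φ b a ω, Gh a ω - G a ω⟫) ∞ μ :=
    memLp_finsetSum _ fun b _ => (memLp_finsetSum _ fun a _ =>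
      ((hφh b a).sub (hφ b a)).inner ((hGh a).sub (hG a)) (r := ∞)).mul' (hH b)
  rw [← integral_sub (int hL) (int hB), ← integral_add (int hT1) (int hT2),
    ← integral_add ((int hT1).fun_add (int hT2)) (int hT3)]
  refine integral_congr_ae ?_
  filter_upwards [hH1, ae_all_iff.2 hφ0] with ω h1 h0
  exact bias_decomposition_pointwise _ _ _ _ _ _ _ _ h1 h0

section Treatment

variable {Ω α : Type*} {m mΩ : MeasurableSpace Ω} {μ : Measure Ω}
  [DecidableEq α] {A : Ω → α}

def treatmentIndicator (A : Ω → α) (b : α) : Ω → ℝ := fun ω => if A ω = b then 1 else 0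

theorem sum_treatmentIndicator_smul [Fintype α] {M : Type*} [AddCommMonoid M] [Module ℝ M]
    (A : Ω → α) (v : α → M) (ω : Ω) : ∑ b, treatmentIndicator A b ω • v b = v (A ω) := by
  simp [treatmentIndicator, ite_smul]

theorem norm_treatmentIndicator_le_one (A : Ω → α) (b : α) (ω : Ω) :
    ‖treatmentIndicator A b ω‖ ≤ 1 := by
  unfold treatmentIndicator; split_ifs <;> simp

theorem memLp_top_treatmentIndicator [MeasurableSpace α] [MeasurableSingletonClass α]
    (hA : Measurable A) (b : α) : MemLp (treatmentIndicator A b) ∞ μ :=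
  memLp_top_of_bound
    (Measurable.ite (p := fun ω => A ω = b) (hA (measurableSet_singleton b)) measurable_const
      measurable_const).aestronglyMeasurable
    1 (ae_of_all _ (norm_treatmentIndicator_le_one A b))

theorem norm_condH_le_one (b : α) : ∀ᵐ ω ∂μ, ‖condH μ m A b ω‖ ≤ 1 :=
  ae_bdd_norm_condExp_of_ae_bdd_norm (ae_of_all _ (norm_treatmentIndicator_le_one A b))

theorem memLp_top_condH (b : α) : MemLp (condH μ m A b) ∞ μ :=
  memLp_top_of_bound integrable_condExp.aestronglyMeasurable 1 (norm_condH_le_one b)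

theorem sum_condH_eq_one [Fintype α] [MeasurableSpace α] [MeasurableSingletonClass α]
    [IsFiniteMeasure μ] (hm : m ≤ mΩ) (hA : Measurable A) :
    ∀ᵐ ω ∂μ, ∑ b, condH μ m A b ω = 1 := by
  have hsum : ∑ b, treatmentIndicator A b = fun _ => (1 : ℝ) := by
    funext ω
    simpa using sum_treatmentIndicator_smul A (fun _ => (1 : ℝ)) ω
  have h := condExp_finsetSum (s := univ)
    (fun b _ => (memLp_top_treatmentIndicator (μ := μ) hA b).integrable le_top) m
  rw [hsum, condExp_const hm] at h
  filter_upwards [h] with ω hω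
  rw [Finset.sum_apply] at hω
  exact hω.symm

end Treatment

section Regression

variable {Ω α : Type*} {m mΩ : MeasurableSpace Ω} {μ : Measure Ω} [DecidableEq α] {A : Ω → α}
  {n : ℕ} {Y : Ω → EuclideanSpace ℝ (Fin n)}

theorem stronglyMeasurable_condG (b : α) : StronglyMeasurable[m] (condG μ m A Y b) :=
  ((stronglyMeasurable_condExp.measurable.inv).fun_smul
    stronglyMeasurable_condExp.measurable).stronglyMeasurable

theorem condExp_treatmentIndicator_smul_ae_eq {b : α} (hH : ∀ᵐ ω ∂μ, condH μ m A b ω ≠ 0) :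
    μ[fun ω => treatmentIndicator A b ω • Y ω|m]
      =ᵐ[μ] fun ω => condH μ m A b ω • condG μ m A Y b ω := by
  filter_upwards [hH] with ω hω
  rw [condG, smul_smul, mul_inv_cancel₀ hω, one_smul]
  rfl

theorem norm_condG_le {b : α} {c C : ℝ} (hc : 0 < c) (hH : ∀ᵐ ω ∂μ, c ≤ condH μ m A b ω)
    (hY : ∀ ω, ‖Y ω‖ ≤ C) : ∀ᵐ ω ∂μ, ‖condG μ m A Y b ω‖ ≤ c⁻¹ * C := by
  have hK : ∀ᵐ ω ∂μ, ‖μ[fun ω => treatmentIndicator A b ω • Y ω|m] ω‖ ≤ C :=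
    ae_bdd_norm_condExp_of_ae_bdd_norm (ae_of_all _ fun ω => by
      rw [norm_smul]
      exact (mul_le_of_le_one_left (norm_nonneg _)
        (norm_treatmentIndicator_le_one A b ω)).trans (hY ω))
  filter_upwards [hH, hK] with ω hHω hKω
  rw [condG, norm_smul, norm_inv, Real.norm_of_nonneg (hc.trans_le hHω).le]
  exact mul_le_mul (inv_anti₀ hc hHω) hKω (norm_nonneg _) (inv_nonneg.2 hc.le)

theorem memLp_top_condG (hm : m ≤ mΩ) {b : α} {c C : ℝ} (hc : 0 < c)
    (hH : ∀ᵐ ω ∂μ, c ≤ condH μ m A b ω) (hY : ∀ ω, ‖Y ω‖ ≤ C) :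
    MemLp (condG μ m A Y b) ∞ μ :=
  memLp_top_of_bound ((stronglyMeasurable_condG b).mono hm).aestronglyMeasurable _
    (norm_condG_le hc hH hY)

theorem integrable_condH_mul_inner_condG {b : α} (hH : ∀ᵐ ω ∂μ, condH μ m A b ω ≠ 0)
    {u : Ω → EuclideanSpace ℝ (Fin n)} (hui : MemLp u ∞ μ) :
    Integrable (fun ω => condH μ m A b ω * ⟪u ω, condG μ m A Y b ω⟫) μ := by
  refine (memLp_one_iff_integrable.1 (hui.inner (memLp_one_iff_integrable.2
    (integrable_condExp (m := m) (f := fun ω => treatmentIndicator A b ω • Y ω))))).congr ?_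
  filter_upwards [condExp_treatmentIndicator_smul_ae_eq (Y := Y) hH] with ω hω
  rw [hω, real_inner_smul_right]

variable [MeasurableSpace α] [MeasurableSingletonClass α] [IsFiniteMeasure μ]

theorem integral_treatmentIndicator_mul (hm : m ≤ mΩ) (hA : Measurable A) (b : α) {f : Ω → ℝ}
    (hf : StronglyMeasurable[m] f) (hfi : Integrable f μ) :
    ∫ ω, treatmentIndicator A b ω * f ω ∂μ = ∫ ω, condH μ m A b ω * f ω ∂μ := by
  simp_rw [mul_comm _ (f _)]
  exact integral_bilin_eq_integral_bilin_condExp (.mul ℝ ℝ) hm hf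
    (hfi.mul_of_top_left (memLp_top_treatmentIndicator hA b))
    ((memLp_top_treatmentIndicator hA b).integrable le_top)

theorem integral_inner_treatmentIndicator_smul (hm : m ≤ mΩ) (hA : Measurable A)
    (hY : Integrable Y μ) {b : α} (hH : ∀ᵐ ω ∂μ, condH μ m A b ω ≠ 0)
    {u : Ω → EuclideanSpace ℝ (Fin n)} (hu : StronglyMeasurable[m] u) (hui : MemLp u ∞ μ) :
    ∫ ω, ⟪u ω, treatmentIndicator A b ω • Y ω⟫ ∂μ
      = ∫ ω, condH μ m A b ω * ⟪u ω, condG μ m A Y b ω⟫ ∂μ := by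
  have hIY : Integrable (fun ω => treatmentIndicator A b ω • Y ω) μ :=
    hY.smul_of_top_right (memLp_top_treatmentIndicator hA b)
  have h := integral_bilin_eq_integral_bilin_condExp (innerSL ℝ) hm hu
    (memLp_one_iff_integrable.1 (hui.inner (memLp_one_iff_integrable.2 hIY))) hIY
  refine h.trans (integral_congr_ae ?_)
  filter_upwards [condExp_treatmentIndicator_smul_ae_eq (Y := Y) hH] with ω hω
  rw [hω, innerSL_apply_apply, real_inner_smul_right]

theorem integral_comp_eq_integral_sum_condH_mul [Fintype α] (hm : m ≤ mΩ) (hA : Measurable A)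
    (hY : Integrable Y μ) (hH : ∀ b, ∀ᵐ ω ∂μ, condH μ m A b ω ≠ 0)
    {ψ : α → Ω → EuclideanSpace ℝ (Fin n) → ℝ} {f : α → Ω → ℝ}
    {u : α → Ω → EuclideanSpace ℝ (Fin n)} (hψ : ∀ b ω y, ψ b ω y = f b ω + ⟪u b ω, y⟫)
    (hf : ∀ b, StronglyMeasurable[m] (f b)) (hfi : ∀ b, Integrable (f b) μ)
    (hu : ∀ b, StronglyMeasurable[m] (u b)) (hui : ∀ b, MemLp (u b) ∞ μ) :
    ∫ ω, ψ (A ω) ω (Y ω) ∂μ = ∫ ω, ∑ b, condH μ m A b ω * ψ b ω (condG μ m A Y b ω) ∂μ := by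
  have hIf (b : α) : Integrable (fun ω => treatmentIndicator A b ω * f b ω) μ :=
    (hfi b).mul_of_top_right (memLp_top_treatmentIndicator hA b)
  have hIY (b : α) : Integrable (fun ω => ⟪u b ω, treatmentIndicator A b ω • Y ω⟫) μ :=
    memLp_one_iff_integrable.1 ((hui b).inner (memLp_one_iff_integrable.2
      (hY.smul_of_top_right (memLp_top_treatmentIndicator hA b))))
  have hHf (b : α) : Integrable (fun ω => condH μ m A b ω * f b ω) μ :=
    (hfi b).mul_of_top_right (memLp_top_condH b)
  have hHG (b : α) := integrable_condH_mul_inner_condG (Y := Y) (hH b) (hui b)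
  have hHψ (b : α) : Integrable (fun ω => condH μ m A b ω * ψ b ω (condG μ m A Y b ω)) μ := by
    simp_rw [hψ, mul_add]
    exact (hHf b).add (hHG b)
  have hsplit (ω : Ω) : ψ (A ω) ω (Y ω)
      = ∑ b, (treatmentIndicator A b ω * f b ω + ⟪u b ω, treatmentIndicator A b ω • Y ω⟫) := by
    simp_rw [hψ, sum_add_distrib, real_inner_smul_right, ← smul_eq_mul,
      sum_treatmentIndicator_smul]
  calc ∫ ω, ψ (A ω) ω (Y ω) ∂μ
      = ∑ b, ∫ ω, (treatmentIndicator A b ω * f b ω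
          + ⟪u b ω, treatmentIndicator A b ω • Y ω⟫) ∂μ := by
        simp_rw [hsplit]
        exact integral_finsetSum _ fun b _ => (hIf b).add (hIY b)
    _ = ∑ b, ∫ ω, condH μ m A b ω * ψ b ω (condG μ m A Y b ω) ∂μ := by
        refine sum_congr rfl fun b _ => ?_
        simp_rw [hψ, mul_add]
        rw [integral_add (hIf b) (hIY b), integral_add (hHf b) (hHG b),
          integral_treatmentIndicator_mul hm hA b (hf b) (hfi b),
          integral_inner_treatmentIndicator_smul hm hA hY (hH b) (hu b) (hui b)]
    _ = ∫ ω, ∑ b, condH μ m A b ω * ψ b ω (condG μ m A Y b ω) ∂μ :=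
        (integral_finsetSum _ fun b _ => hHψ b).symm

section Nuisance

variable [Fintype α] {Gh wh : α → Ω → EuclideanSpace ℝ (Fin n)}
  {φ φh : α → α → Ω → EuclideanSpace ℝ (Fin n)} {Hh : α → Ω → ℝ}

theorem integral_eif_eq_integral_sum_condH_mul (hm : m ≤ mΩ) (hA : Measurable A)
    (hY : Integrable Y μ) (hH : ∀ b, ∀ᵐ ω ∂μ, condH μ m A b ω ≠ 0)
    (hGh : ∀ a, Measurable[m] (Gh a)) (hGhM : ∀ a, MemLp (Gh a) ∞ μ)
    (hwh : ∀ a, Measurable[m] (wh a)) (hwhM : ∀ a, MemLp (wh a) ∞ μ)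
    (hφh : ∀ b a, Measurable[m] (φh b a)) (hφhM : ∀ b a, MemLp (φh b a) ∞ μ)
    (hHh : ∀ a, Measurable[m] (Hh a)) (hHhM : ∀ a, MemLp (fun ω => (Hh a ω)⁻¹) ∞ μ) :
    ∫ ω, (∑ a, ⟪wh a ω + φh (A ω) a ω, Gh a ω⟫) + ⟪wh (A ω) ω, Y ω - Gh (A ω) ω⟫ / Hh (A ω) ω ∂μ
      = ∫ ω, ∑ b, condH μ m A b ω * ((∑ a, ⟪wh a ω + φh b a ω, Gh a ω⟫)
          + ⟪wh b ω, condG μ m A Y b ω - Gh b ω⟫ / Hh b ω) ∂μ := by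
  refine integral_comp_eq_integral_sum_condH_mul hm hA hY hH
    (ψ := fun b ω y => ∑ a, ⟪wh a ω + φh b a ω, Gh a ω⟫ + ⟪wh b ω, y - Gh b ω⟫ / Hh b ω)
    (f := fun b ω => ∑ a, ⟪wh a ω + φh b a ω, Gh a ω⟫ - (Hh b ω)⁻¹ * ⟪wh b ω, Gh b ω⟫)
    (u := fun b ω => (Hh b ω)⁻¹ • wh b ω) (fun b ω y => ?_)
    (fun b => (by fun_prop : Measurable[m] _).stronglyMeasurable) (fun b => ?_)
    (fun b => ((hHh b).inv.fun_smul (hwh b)).stronglyMeasurable) (fun b => (hwhM b).smul (hHhM b))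
  · simp only [inner_sub_right, real_inner_smul_left]
    ring
  · exact ((memLp_finsetSum _ fun a _ => ((hwhM a).add (hφhM b a)).inner (hGhM a)).sub
      (((hwhM b).inner (hGhM b) (r := ∞)).mul' (hHhM b))).integrable le_top

theorem integral_remainder_eq_integral_sum_condH_mul (hm : m ≤ mΩ) (hA : Measurable A)
    (hY : Integrable Y μ) (hH : ∀ b, ∀ᵐ ω ∂μ, condH μ m A b ω ≠ 0)
    (hGh : ∀ a, Measurable[m] (Gh a)) (hGhM : ∀ a, MemLp (Gh a) ∞ μ)
    (hφ : ∀ b a, Measurable[m] (φ b a)) (hφM : ∀ b a, MemLp (φ b a) ∞ μ)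
    (hφh : ∀ b a, Measurable[m] (φh b a)) (hφhM : ∀ b a, MemLp (φh b a) ∞ μ)
    (hGM : ∀ a, MemLp (condG μ m A Y a) ∞ μ) :
    ∫ ω, ∑ a, ⟪φh (A ω) a ω - φ (A ω) a ω, Gh a ω - condG μ m A Y a ω⟫ ∂μ
      = ∫ ω, ∑ b, condH μ m A b ω
          * ∑ a, ⟪φh b a ω - φ b a ω, Gh a ω - condG μ m A Y a ω⟫ ∂μ := by
  have hG (a : α) := (stronglyMeasurable_condG (μ := μ) (m := m) (A := A) (Y := Y) a).measurable
  exact integral_comp_eq_integral_sum_condH_mul hm hA hY hH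
    (ψ := fun b ω _ => ∑ a, ⟪φh b a ω - φ b a ω, Gh a ω - condG μ m A Y a ω⟫)
    (f := fun b ω => ∑ a, ⟪φh b a ω - φ b a ω, Gh a ω - condG μ m A Y a ω⟫)
    (u := fun _ _ => 0) (by simp) (fun b => (by fun_prop : Measurable[m] _).stronglyMeasurable)
    (fun b => (memLp_finsetSum _ fun a _ => ((hφhM b a).sub (hφM b a)).inner
      ((hGhM a).sub (hGM a))).integrable le_top)
    (fun _ => stronglyMeasurable_const) (fun _ => memLp_top_const 0)

end Nuisance

end Regression

theorem stmt3_general {Ω : Type*} {mΩ : MeasurableSpace Ω}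
    (μ : Measure Ω) [IsProbabilityMeasure μ]
    (m : MeasurableSpace Ω) (hm : m ≤ mΩ)
    {α : Type*} [Fintype α] [DecidableEq α] [MeasurableSpace α] [MeasurableSingletonClass α]
    {n : ℕ}
    (A : Ω → α) (hA : Measurable[mΩ] A)
    (Y : Ω → EuclideanSpace ℝ (Fin n)) (hY : Measurable[mΩ] Y)
    (CY : ℝ) (hYb : ∀ ω, ‖Y ω‖ ≤ CY)
    -- positivity of the cluster-level treatment probability
    (c : ℝ) (hc : 0 < c)
    (hH : ∀ a : α, ∀ᵐ ω ∂μ, c ≤ condH μ m A a ω)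
    -- bounded m-measurable weight functions
    (w : α → Ω → EuclideanSpace ℝ (Fin n)) (hw : ∀ a, Measurable[m] (w a))
    (Cw : ℝ) (hwb : ∀ a ω, ‖w a ω‖ ≤ Cw)
    -- bounded m-measurable influence functions of the weights, with conditional mean zero
    (φ : α → α → Ω → EuclideanSpace ℝ (Fin n)) (hφ : ∀ a' a, Measurable[m] (φ a' a))
    (Cφ : ℝ) (hφb : ∀ a' a ω, ‖φ a' a ω‖ ≤ Cφ)
    (hφ0 : ∀ a : α, ∀ᵐ ω ∂μ, ∑ a', condH μ m A a' ω • φ a' a ω = 0)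
    -- fixed bounded m-measurable nuisance estimates
    (Gh : α → Ω → EuclideanSpace ℝ (Fin n)) (hGh : ∀ a, Measurable[m] (Gh a))
    (CG : ℝ) (hGhb : ∀ a ω, ‖Gh a ω‖ ≤ CG)
    (Hh : α → Ω → ℝ) (hHh : ∀ a, Measurable[m] (Hh a))
    (hHhc : ∀ a : α, ∀ᵐ ω ∂μ, c ≤ Hh a ω)
    (wh : α → Ω → EuclideanSpace ℝ (Fin n)) (hwh : ∀ a, Measurable[m] (wh a))
    (Cwh : ℝ) (hwhb : ∀ a ω, ‖wh a ω‖ ≤ Cwh)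
    (φh : α → α → Ω → EuclideanSpace ℝ (Fin n)) (hφh : ∀ a' a, Measurable[m] (φh a' a))
    (Cφh : ℝ) (hφhb : ∀ a' a ω, ‖φh a' a ω‖ ≤ Cφh) :
    (∫ ω, ((∑ a, ⟪wh a ω + φh (A ω) a ω, Gh a ω⟫)
        + ⟪wh (A ω) ω, Y ω - Gh (A ω) ω⟫ / Hh (A ω) ω) ∂μ)
      - ∫ ω, ∑ a, ⟪w a ω, condG μ m A Y a ω⟫ ∂μ
    = (∫ ω, ∑ a,
          ⟪wh a ω - w a ω + ∑ a', condH μ m A a' ω • φh a' a ω,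
            condG μ m A Y a ω⟫ ∂μ)
      + (∫ ω, ∑ a,
          ⟪wh a ω, Gh a ω - condG μ m A Y a ω⟫
            * (1 - condH μ m A a ω / Hh a ω) ∂μ)
      + ∫ ω, ∑ a,
          ⟪φh (A ω) a ω - φ (A ω) a ω, Gh a ω - condG μ m A Y a ω⟫ ∂μ := by
  have hH0 (b : α) : ∀ᵐ ω ∂μ, condH μ m A b ω ≠ 0 := (hH b).mono fun ω h => (hc.trans_le h).ne'
  have hYi : Integrable Y μ := Integrable.of_bound hY.aestronglyMeasurable CY (ae_of_all _ hYb)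
  have top {f : Ω → EuclideanSpace ℝ (Fin n)} {C : ℝ} (hf : Measurable f)
      (hC : ∀ ω, ‖f ω‖ ≤ C) : MemLp f ∞ μ :=
    memLp_top_of_bound (hf.mono hm le_rfl).aestronglyMeasurable C (ae_of_all _ hC)
  have hwM a := top (hw a) (hwb a)
  have hwhM a := top (hwh a) (hwhb a)
  have hGhM a := top (hGh a) (hGhb a)
  have hφM a' a := top (hφ a' a) (hφb a' a)
  have hφhM a' a := top (hφh a' a) (hφhb a' a)
  have hHhM (b : α) : MemLp (fun ω => (Hh b ω)⁻¹) ∞ μ := by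
    refine memLp_top_of_bound ((hHh b).inv.mono hm le_rfl).aestronglyMeasurable c⁻¹ ?_
    filter_upwards [hHhc b] with ω h
    rw [norm_inv, Real.norm_of_nonneg (hc.le.trans h)]
    exact inv_anti₀ hc h
  have hHM (b : α) := memLp_top_condH (μ := μ) (m := m) (A := A) b
  have hGM (b : α) := memLp_top_condG hm hc (hH b) hYb
  rw [integral_eif_eq_integral_sum_condH_mul hm hA hYi hH0 hGh hGhM hwh hwhM hφh hφhM hHh hHhM,
    integral_remainder_eq_integral_sum_condH_mul hm hA hYi hH0 hGh hGhM hφ hφM hφh hφhM hGM]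
  exact integral_bias_decomposition hHM hHhM hwM hwhM hGM hGhM hφM hφhM
    (sum_condH_eq_one hm hA) hφ0

/-- (Bias decomposition, the central identity in the proof of Theorem 2.)
With `φ̂_unc = ∑_a ⟨ŵ(a) + φ̂(A,a), Ĝ(a)⟩ + ⟨ŵ(A), Y − Ĝ(A)⟩/Ĥ(A)` the
uncentered efficient influence function evaluated at fixed nuisance estimates,
`E[φ̂_unc] − Ψ(w)
  = E[∑_a ⟨ŵ(a) − w(a) + ∑_{a'} H(a')·φ̂(a',a), G(a)⟩]
  + E[∑_a ⟨ŵ(a), Ĝ(a) − G(a)⟩·(1 − H(a)/Ĥ(a))]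
  + E[∑_a ⟨φ̂(A,a) − φ(A,a), Ĝ(a) − G(a)⟩]`. -/
theorem stmt3 {Ω : Type*} {mΩ : MeasurableSpace Ω}
    (μ : Measure Ω) [IsProbabilityMeasure μ]
    (m : MeasurableSpace Ω) (hm : m ≤ mΩ)
    {α : Type*} [Fintype α] [DecidableEq α] [MeasurableSpace α] [MeasurableSingletonClass α]
    {n : ℕ}
    (A : Ω → α) (hA : Measurable[mΩ] A)
    (Y : Ω → EuclideanSpace ℝ (Fin n)) (hY : Measurable[mΩ] Y)
    (CY : ℝ) (hYb : ∀ ω, ‖Y ω‖ ≤ CY)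
    -- positivity of the cluster-level treatment probability
    (c : ℝ) (hc : 0 < c)
    (hH : ∀ a : α, ∀ᵐ ω ∂μ, c ≤ condH μ m A a ω)
    -- bounded m-measurable weight functions
    (w : α → Ω → EuclideanSpace ℝ (Fin n)) (hw : ∀ a, Measurable[m] (w a))
    (Cw : ℝ) (hwb : ∀ a ω, ‖w a ω‖ ≤ Cw)
    -- bounded m-measurable influence functions of the weights, with conditional mean zero
    (φ : α → α → Ω → EuclideanSpace ℝ (Fin n)) (hφ : ∀ a' a, Measurable[m] (φ a' a))
    (Cφ : ℝ) (hφb : ∀ a' a ω, ‖φ a' a ω‖ ≤ Cφ)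
    (hφ0 : ∀ a : α, ∀ᵐ ω ∂μ, ∑ a', condH μ m A a' ω • φ a' a ω = 0)
    -- fixed bounded m-measurable nuisance estimates
    (Gh : α → Ω → EuclideanSpace ℝ (Fin n)) (hGh : ∀ a, Measurable[m] (Gh a))
    (CG : ℝ) (hGhb : ∀ a ω, ‖Gh a ω‖ ≤ CG)
    (Hh : α → Ω → ℝ) (hHh : ∀ a, Measurable[m] (Hh a))
    (hHhc : ∀ a : α, ∀ᵐ ω ∂μ, c ≤ Hh a ω) (hHhb : ∀ a ω, Hh a ω ≤ 1)
    (wh : α → Ω → EuclideanSpace ℝ (Fin n)) (hwh : ∀ a, Measurable[m] (wh a))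
    (Cwh : ℝ) (hwhb : ∀ a ω, ‖wh a ω‖ ≤ Cwh)
    (φh : α → α → Ω → EuclideanSpace ℝ (Fin n)) (hφh : ∀ a' a, Measurable[m] (φh a' a))
    (Cφh : ℝ) (hφhb : ∀ a' a ω, ‖φh a' a ω‖ ≤ Cφh) :
    (∫ ω, ((∑ a, ⟪wh a ω + φh (A ω) a ω, Gh a ω⟫)
        + ⟪wh (A ω) ω, Y ω - Gh (A ω) ω⟫ / Hh (A ω) ω) ∂μ)
      - ∫ ω, ∑ a, ⟪w a ω, condG μ m A Y a ω⟫ ∂μ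
    = (∫ ω, ∑ a,
          ⟪wh a ω - w a ω + ∑ a', condH μ m A a' ω • φh a' a ω,
            condG μ m A Y a ω⟫ ∂μ)
      + (∫ ω, ∑ a,
          ⟪wh a ω, Gh a ω - condG μ m A Y a ω⟫
            * (1 - condH μ m A a ω / Hh a ω) ∂μ)
      + ∫ ω, ∑ a,
          ⟪φh (A ω) a ω - φ (A ω) a ω, Gh a ω - condG μ m A Y a ω⟫ ∂μ :=
  stmt3_general μ m hm A hA Y hY CY hYb c hc hH w hw Cw hwb φ hφ Cφ hφb hφ0 Gh hGh CG hGhb Hh hHh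
    hHhc wh hwh Cwh hwhb φh hφh Cφh hφhb
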